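/- arXiv:1102.0542 — 6 statements merged into one kernel-verified Lean document; each statement's English description precedes it below -/
import Mathlib

section
/- Let i be even and let R be the cyclic rotation moving the last letter to the front. If a word u of length d satisfies |S(u)| ≤ i, then |S(R(u))| ≤ i. -/
/-- The switch set of a word `u` of length `d` over the alphabet {x,y}. -/
def sw (d : ℕ) (u : ℕ → Bool) : Finset ℕ :=
  (Finset.Ico 1 d).filter (fun j => u j ≠ u (j + 1))

/-- Cyclic rotation moving the last letter to the front. -/
def rot (d : ℕ) (u : ℕ → Bool) : ℕ → Bool :=
  fun n => if n = 1 then u d else u (n - 1)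

/-!
Rotating `u` shifts every switch `j` of `u` with `j < d - 1` to `j + 1` and may create one
new switch, at position `1`, exactly when `u d ≠ u 1`. A word has an even number of switches iff
its first and last letters agree, so a new switch can only appear when `|S(u)|` is odd, hence
strictly below the even bound `i`.
-/

section Switches

variable {d : ℕ} {u : ℕ → Bool}

lemma sw_mono {d e : ℕ} (hde : d ≤ e) (u : ℕ → Bool) : sw d u ⊆ sw e u :=
  Finset.filter_subset_filter _ (Finset.Ico_subset_Ico_right hde)

lemma sw_succ (hd : 1 ≤ d) :
    sw (d + 1) u = if u d = u (d + 1) then sw d u else insert d (sw d u) := by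
  unfold sw
  rw [Nat.Ico_succ_right_eq_insert_Ico hd, Finset.filter_insert]
  split_ifs <;> simp_all

lemma self_notMem_sw (d : ℕ) (u : ℕ → Bool) : d ∉ sw d u := by
  simp [sw]

theorem even_card_sw_iff (hd : 1 ≤ d) : Even (sw d u).card ↔ u 1 = u d := by
  induction d, hd using Nat.le_induction with
  | base => simp [sw]
  | succ d hd ih =>
    rw [sw_succ hd]
    split_ifs with hstep
    · rw [ih, hstep]
    · rw [Finset.card_insert_of_notMem (self_notMem_sw d u), Nat.even_add_one, ih]
      revert hstep
      cases u 1 <;> cases u d <;> cases u (d + 1) <;> simp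

lemma one_mem_sw_rot_iff : 1 ∈ sw d (rot d u) ↔ 2 ≤ d ∧ u 1 ≠ u d := by
  simp [sw, rot, eq_comm, Nat.lt_iff_add_one_le]

lemma sw_rot_erase_one :
    (sw d (rot d u)).erase 1 = (sw (d - 1) u).map (addRightEmbedding 1) := by
  ext j
  simp only [sw, Finset.mem_erase, Finset.mem_filter, Finset.mem_Ico, Finset.mem_map,
    addRightEmbedding_apply]
  constructor
  · rintro ⟨hj1, ⟨hj, hjd⟩, hsw⟩
    refine ⟨j - 1, ⟨⟨by omega, by omega⟩, ?_⟩, by omega⟩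
    simpa [rot, hj1, Nat.sub_add_cancel hj, Nat.ne_of_gt hj] using hsw
  · rintro ⟨k, ⟨⟨hk, hkd⟩, hsw⟩, rfl⟩
    exact ⟨by omega, ⟨by omega, by omega⟩, by simpa [rot, Nat.ne_of_gt hk] using hsw⟩

lemma card_sw_rot_erase_one_le : ((sw d (rot d u)).erase 1).card ≤ (sw d u).card := by
  rw [sw_rot_erase_one, Finset.card_map]
  exact Finset.card_le_card (sw_mono (Nat.sub_le d 1) u)

end Switches

/-- For even `i`, if a word has at most `i` switches, so does its rotation. -/
theorem stmt5 (d i : ℕ) (hd : 1 ≤ d) (hi : Even i) (u : ℕ → Bool)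
    (h : (sw d u).card ≤ i) :
    (sw d (rot d u)).card ≤ i := by
  have hshift := card_sw_rot_erase_one_le (d := d) (u := u)
  by_cases hends : u 1 = u d
  · have hnew : 1 ∉ sw d (rot d u) := fun h1 => (one_mem_sw_rot_iff.mp h1).2 hends
    rw [Finset.erase_eq_of_notMem hnew] at hshift
    exact hshift.trans h
  · have hodd : ¬Even (sw d u).card := fun he => hends ((even_card_sw_iff hd).mp he)
    have hlt : (sw d u).card < i := lt_of_le_of_ne h fun heq => hodd (heq ▸ hi)
    have hcard := Finset.pred_card_le_card_erase (s := sw d (rot d u)) (a := 1)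
    omega
end

section
/- For 0 ≤ i ≤ d-1 and 0 ≤ j ≤ d, the h-numbers of B(i,d) are h_j = C(d,j) if j ≤ i+1 and h_j = (-1)^{j-i-1} C(d,j) if j > i+1, where h_j is defined by the relation ∑_j h_j x^{d-j} = ∑_j f_{j-1} (x-1)^{d-j} and f_{j-1} is the number of (j-1)-faces of B(i,d). -/
/-- The facet of the boundary of the `d`-cross-polytope corresponding to the
word `u`: vertices are pairs (position, letter). -/
def facetOf (d : ℕ) (u : ℕ → Bool) : Finset (ℕ × Bool) :=
  (Finset.Icc 1 d).image (fun j => (j, u j))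

open Classical in
/-- The faces of `B(i,d)`: subsets of facets of the cross-polytope boundary
whose word has at most `i` switches. -/
noncomputable def facesB (i d : ℕ) : Finset (Finset (ℕ × Bool)) :=
  ((Finset.Icc 1 d ×ˢ (Finset.univ : Finset Bool)).powerset).filter
    (fun σ => ∃ u : ℕ → Bool, (sw d u).card ≤ i ∧ σ ⊆ facetOf d u)

/-- `fB i d k` is the number of faces of `B(i,d)` of cardinality `k`,
i.e. the face number `f_{k-1}` (with `f_{-1} = 1`). -/
noncomputable def fB (i d k : ℕ) : ℕ :=
  ((facesB i d).filter (fun σ => σ.card = k)).card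

/-!
Read along its set of positions `S`, a face of `B(i,d)` is a word of length `#S`. Extending it
by letters that are constant up to the next position of `S` creates no new switches, and
restricting a facet word to `S` loses switches, so the faces of size `k` are `C(d,k)` copies of
the words of length `k` with at most `i` switches. Splitting on the last letter, their number
`W(i,k)` satisfies `W(i+1,k+1) = W(i+1,k) + W(i,k)`, the Pascal-type recursion of
`∑_j ε_j C(k,j)` where `ε_j` is the sign of the claimed `h_j`. Finally
`C(d,k) C(k,j) = C(d,j) C(d-j,k-j)` and `X^(d-j) = (1 + (X-1))^(d-j)` turn this into the
`h`-vector.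
-/

open Finset

lemma mem_sw {d j : ℕ} {u : ℕ → Bool} : j ∈ sw d u ↔ 1 ≤ j ∧ j < d ∧ u j ≠ u (j + 1) := by
  simp [sw, and_assoc]

lemma sw_congr {d : ℕ} {u v : ℕ → Bool} (h : ∀ j ∈ Icc 1 d, u j = v j) : sw d u = sw d v := by
  ext j
  simp only [mem_sw]
  constructor <;> rintro ⟨h1, h2, h3⟩ <;>
    refine ⟨h1, h2, ?_⟩ <;>
    rwa [h j (mem_Icc.2 ⟨h1, h2.le⟩), h (j + 1) (mem_Icc.2 ⟨by omega, h2⟩)] at *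

lemma card_sw_succ {d : ℕ} (hd : 1 ≤ d) (u : ℕ → Bool) :
    #(sw (d + 1) u) = #(sw d u) + if u d = u (d + 1) then 0 else 1 := by
  rw [sw, ← insert_Ico_right_eq_Ico_add_one hd, filter_insert, ← sw]
  by_cases h : u d = u (d + 1)
  · simp [h]
  · simp only [ne_eq, h, not_false_eq_true, if_true, if_false]
    exact card_insert_of_notMem (by simp [mem_sw])

lemma exists_switch_between {α : Type*} {u : ℕ → α} {a b : ℕ} (hab : a ≤ b) (h : u a ≠ u b) :
    ∃ j, a ≤ j ∧ j < b ∧ u j ≠ u (j + 1) := by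
  induction b, hab using Nat.le_induction with
  | base => exact absurd rfl h
  | succ n hn ih =>
    by_cases hn' : u a = u n
    · exact ⟨n, hn, n.lt_succ_self, hn' ▸ h⟩
    · obtain ⟨j, h1, h2, h3⟩ := ih hn'
      exact ⟨j, h1, by omega, h3⟩

def rankIn (S : Finset ℕ) (j : ℕ) : ℕ := Nat.count (· ∈ S) (j + 1)

section rankIn

variable {S : Finset ℕ}

lemma rankIn_succ (j : ℕ) : rankIn S (j + 1) = rankIn S j + if j + 1 ∈ S then 1 else 0 :=
  Nat.count_succ _ _

lemma rankIn_mono : Monotone (rankIn S) :=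
  fun _ _ h => Nat.count_monotone _ (Nat.succ_le_succ h)

lemma rankIn_of_mem {s : ℕ} (hs : s ∈ S) : rankIn S s = Nat.count (· ∈ S) s + 1 := by
  rw [rankIn, Nat.count_succ, if_pos hs]

lemma rankIn_lt_of_lt {j s : ℕ} (hs : s ∈ S) (hjs : j < s) : rankIn S j < rankIn S s :=
  (Nat.count_monotone _ hjs).trans_lt (by rw [rankIn_of_mem hs]; omega)

lemma rankIn_injOn : Set.InjOn (rankIn S) S := fun s hs s' hs' h => by
  rw [mem_coe] at hs hs'
  rw [rankIn_of_mem hs, rankIn_of_mem hs'] at h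
  exact Nat.count_injective hs hs' (Nat.add_right_cancel h)

lemma rankIn_le_card (j : ℕ) : rankIn S j ≤ #S := by
  rw [rankIn, Nat.count_eq_card_filter_range]
  exact card_le_card fun x hx => (mem_filter.1 hx).2

lemma image_rankIn : S.image (rankIn S) = Icc 1 #S := by
  refine eq_of_subset_of_card_le (fun t ht => ?_) ?_
  · obtain ⟨s, hs, rfl⟩ := mem_image.1 ht
    exact mem_Icc.2 ⟨by rw [rankIn_of_mem hs]; omega, rankIn_le_card s⟩
  · rw [card_image_of_injOn rankIn_injOn, Nat.card_Icc, Nat.add_sub_cancel]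

end rankIn

lemma card_sw_le_of_eq_rankIn {d : ℕ} {S : Finset ℕ} (hS : S ⊆ Icc 1 d) {u w : ℕ → Bool}
    (huw : ∀ s ∈ S, u s = w (rankIn S s)) : #(sw #S w) ≤ #(sw d u) := by
  refine (card_le_card fun t ht => ?_).trans (card_image_le (f := rankIn S))
  obtain ⟨ht1, htk, hwt⟩ := mem_sw.1 ht
  have hrank : ∀ r ∈ Icc 1 #S, ∃ s ∈ S, rankIn S s = r := by
    rw [← image_rankIn]; exact fun r hr => mem_image.1 hr
  obtain ⟨s, hs, rfl⟩ := hrank t (mem_Icc.2 ⟨ht1, htk.le⟩)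
  obtain ⟨s', hs', hs't⟩ := hrank (rankIn S s + 1) (mem_Icc.2 ⟨by omega, htk⟩)
  have hss' : s < s' := lt_of_not_ge fun h => by have := rankIn_mono (S := S) h; omega
  obtain ⟨j, hsj, hjs', hj⟩ :=
    exists_switch_between (u := u) hss'.le (by rwa [huw s hs, huw s' hs', hs't])
  have hs1 := (mem_Icc.1 (hS hs)).1
  have hs'd := (mem_Icc.1 (hS hs')).2
  have hrj := rankIn_lt_of_lt hs' hjs'
  exact mem_image.2 ⟨j, mem_sw.2 ⟨by omega, by omega, hj⟩,
    le_antisymm (by omega) (rankIn_mono hsj)⟩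

-- Before the first position of `S` the word continues its first letter.
def extendAlong (S : Finset ℕ) (w : ℕ → Bool) (j : ℕ) : Bool := w (max 1 (rankIn S j))

lemma extendAlong_of_mem {S : Finset ℕ} {w : ℕ → Bool} {s : ℕ} (hs : s ∈ S) :
    extendAlong S w s = w (rankIn S s) := by
  rw [extendAlong, max_eq_right (by rw [rankIn_of_mem hs]; omega)]

lemma rankIn_succ_of_extendAlong_ne {S : Finset ℕ} {w : ℕ → Bool} {j : ℕ}
    (h : extendAlong S w j ≠ extendAlong S w (j + 1)) :
    j + 1 ∈ S ∧ 1 ≤ rankIn S j ∧ rankIn S (j + 1) = rankIn S j + 1 := by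
  rw [extendAlong, extendAlong, rankIn_succ] at h
  by_cases hj : j + 1 ∈ S
  · rw [if_pos hj] at h
    refine ⟨hj, ?_, by rw [rankIn_succ, if_pos hj]⟩
    by_contra h0
    exact h (by rw [show rankIn S j = 0 by omega]; rfl)
  · simp [hj] at h

lemma card_sw_extendAlong_le (d : ℕ) (S : Finset ℕ) (w : ℕ → Bool) :
    #(sw d (extendAlong S w)) ≤ #(sw #S w) := by
  refine card_le_card_of_injOn (rankIn S) (fun j hj => ?_) (fun j hj j' hj' h => ?_)
  · obtain ⟨-, -, hjw⟩ := mem_sw.1 (mem_coe.1 hj)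
    obtain ⟨hj1, hr1, hr⟩ := rankIn_succ_of_extendAlong_ne hjw
    have hle := rankIn_le_card (S := S) (j + 1)
    rw [extendAlong, extendAlong, hr, max_eq_right hr1, max_eq_right (by omega)] at hjw
    exact mem_sw.2 ⟨hr1, by omega, hjw⟩
  · obtain ⟨hj1, -, hr⟩ := rankIn_succ_of_extendAlong_ne (mem_sw.1 (mem_coe.1 hj)).2.2
    obtain ⟨hj1', -, hr'⟩ := rankIn_succ_of_extendAlong_ne (mem_sw.1 (mem_coe.1 hj')).2.2
    have := rankIn_injOn (mem_coe.2 hj1) (mem_coe.2 hj1') (by rw [hr, hr', h])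
    omega

lemma mem_facesB {i d : ℕ} {σ : Finset (ℕ × Bool)} :
    σ ∈ facesB i d ↔ ∃ u : ℕ → Bool, #(sw d u) ≤ i ∧ σ ⊆ facetOf d u := by
  classical
  rw [facesB, mem_filter, mem_powerset]
  refine ⟨And.right, fun h => ⟨?_, h⟩⟩
  obtain ⟨u, -, hσ⟩ := h
  exact hσ.trans (image_subset_iff.2 fun j hj => mem_product.2 ⟨hj, mem_univ _⟩)

-- `T ⊆ [1, #S]` lists the indices of the letters `y` (`true`) in the word read along `S`.
def faceOf (S T : Finset ℕ) : Finset (ℕ × Bool) :=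
  S.image fun s => (s, decide (rankIn S s ∈ T))

def switchBoundedWords (i k : ℕ) : Finset (Finset ℕ) :=
  (Icc 1 k).powerset.filter fun T => #(sw k (· ∈ T)) ≤ i

section faceOf

variable {S T : Finset ℕ}

lemma card_faceOf : #(faceOf S T) = #S :=
  card_image_of_injective _ fun _ _ h => congrArg Prod.fst h

lemma image_fst_faceOf : (faceOf S T).image Prod.fst = S := by
  simp [faceOf, image_image, Function.comp_def]

lemma mem_faceOf_true {s : ℕ} (hs : s ∈ S) : (s, true) ∈ faceOf S T ↔ rankIn S s ∈ T := by
  simp [faceOf, hs]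

lemma faceOf_eq_image {u : ℕ → Bool} (h : ∀ s ∈ S, u s = decide (rankIn S s ∈ T)) :
    faceOf S T = S.image fun s => (s, u s) :=
  image_congr fun s hs => by simp [h s hs]

lemma faceOf_mem_facesB {i d : ℕ} (hS : S ⊆ Icc 1 d) (hT : #(sw #S (· ∈ T)) ≤ i) :
    faceOf S T ∈ facesB i d := by
  refine mem_facesB.2 ⟨extendAlong S (· ∈ T), (card_sw_extendAlong_le d S _).trans hT, ?_⟩
  rw [faceOf_eq_image (u := extendAlong S (· ∈ T)) fun s hs => extendAlong_of_mem hs, facetOf]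
  exact image_subset_image hS

end faceOf

lemma exists_faceOf_eq_of_mem_facesB {i d : ℕ} {σ : Finset (ℕ × Bool)} (hσ : σ ∈ facesB i d) :
    ∃ S ⊆ Icc 1 d, ∃ T ⊆ Icc 1 #S, #(sw #S (· ∈ T)) ≤ i ∧ faceOf S T = σ := by
  obtain ⟨u, hu, hσu⟩ := mem_facesB.1 hσ
  obtain ⟨S, hS, rfl⟩ := subset_image_iff.1 hσu
  set T := {s ∈ S | u s = true}.image (rankIn S)
  have huT : ∀ s ∈ S, u s = decide (rankIn S s ∈ T) := by
    intro s hs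
    rw [Bool.eq_iff_iff, decide_eq_true_iff]
    simp only [T, mem_image, mem_filter]
    refine ⟨fun h => ⟨s, ⟨hs, h⟩, rfl⟩, ?_⟩
    rintro ⟨a, ⟨ha, hua⟩, har⟩
    rwa [← rankIn_injOn ha hs har]
  refine ⟨S, hS, T, ?_, (card_sw_le_of_eq_rankIn hS huT).trans hu, faceOf_eq_image huT⟩
  rw [← image_rankIn]
  exact image_subset_image (filter_subset _ _)

lemma faceOf_injOn : Set.InjOn (fun p : Finset ℕ × Finset ℕ => faceOf p.1 p.2)
    {p | p.2 ⊆ Icc 1 #p.1} := by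
  rintro ⟨S, T⟩ hT ⟨S', T'⟩ hT' h
  obtain rfl : S = S' := by
    simpa only [image_fst_faceOf] using congrArg (image Prod.fst) h
  have subset_of_eq : ∀ {T T'}, T ⊆ Icc 1 #S → faceOf S T = faceOf S T' → T ⊆ T' := by
    intro T T' hT h t ht
    obtain ⟨s, hs, rfl⟩ := mem_image.1 ((image_rankIn (S := S)).symm ▸ hT ht)
    rwa [← mem_faceOf_true hs, ← h, mem_faceOf_true hs]
  exact Prod.ext rfl (Subset.antisymm (subset_of_eq hT h) (subset_of_eq hT' h.symm))

lemma fB_eq_choose_mul_card (i d k : ℕ) :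
    fB i d k = d.choose k * #(switchBoundedWords i k) := by
  have hfaces : {σ ∈ facesB i d | #σ = k} =
      (powersetCard k (Icc 1 d) ×ˢ switchBoundedWords i k).image fun p => faceOf p.1 p.2 := by
    ext σ
    simp only [mem_filter, mem_image, mem_product, mem_powersetCard, switchBoundedWords,
      mem_powerset, Prod.exists]
    constructor
    · rintro ⟨hσ, rfl⟩
      obtain ⟨S, hS, T, hT, hTi, rfl⟩ := exists_faceOf_eq_of_mem_facesB hσ
      exact ⟨S, T, ⟨⟨hS, card_faceOf.symm⟩, by rwa [card_faceOf], by rwa [card_faceOf]⟩, rfl⟩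
    · rintro ⟨S, T, ⟨⟨hS, rfl⟩, hT, hTi⟩, rfl⟩
      exact ⟨faceOf_mem_facesB hS hTi, card_faceOf⟩
  rw [fB, hfaces, card_image_of_injOn, card_product, card_powersetCard, Nat.card_Icc,
    Nat.add_sub_cancel]
  refine faceOf_injOn.mono fun p hp => ?_
  obtain ⟨hS, hT⟩ := mem_product.1 (mem_coe.1 hp)
  show p.2 ⊆ Icc 1 #p.1
  rw [(mem_powersetCard.1 hS).2]
  exact mem_powerset.1 (mem_filter.1 hT).1

lemma card_switchBoundedWords_zero (i : ℕ) : #(switchBoundedWords i 0) = 1 := by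
  simp [switchBoundedWords, sw]

lemma card_switchBoundedWords_one (i : ℕ) : #(switchBoundedWords i 1) = 2 := by
  simp [switchBoundedWords, sw]

lemma card_switchBoundedWords_succ {k : ℕ} (hk : 1 ≤ k) (i : ℕ) :
    #(switchBoundedWords i (k + 1)) =
      #(switchBoundedWords i k) + #{T ∈ (Icc 1 k).powerset | #(sw k (· ∈ T)) + 1 ≤ i} := by
  have hk1 : k + 1 ∉ Icc 1 k := by simp
  rw [switchBoundedWords, switchBoundedWords, card_filter, card_filter, card_filter,
    ← insert_Icc_right_eq_Icc_add_one (by omega), sum_powerset_insert hk1,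
    ← sum_add_distrib, ← sum_add_distrib]
  refine sum_congr rfl fun T hT => ?_
  have hT1 : k + 1 ∉ T := fun h => hk1 (mem_powerset.1 hT h)
  have hsw : sw k (· ∈ insert (k + 1) T) = sw k (· ∈ T) :=
    sw_congr fun j hj => by simp [(show j ≠ k + 1 by simp at hj; omega)]
  rw [card_sw_succ hk, card_sw_succ hk, hsw]
  by_cases hkT : k ∈ T <;> simp [hkT, hT1, add_comm]

def hSign (i j : ℕ) : ℤ := if j ≤ i + 1 then 1 else (-1) ^ (j - i - 1)

lemma hSign_zero_right (i : ℕ) : hSign i 0 = 1 := if_pos (Nat.zero_le _)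

lemma hSign_one_right (i : ℕ) : hSign i 1 = 1 := if_pos (by omega)

lemma hSign_succ_succ (i j : ℕ) : hSign (i + 1) (j + 1) = hSign i j := by
  simp only [hSign, show j + 1 - (i + 1) - 1 = j - i - 1 by omega, add_le_add_iff_right]

lemma hSign_zero_succ (j : ℕ) : hSign 0 (j + 1) = (-1) ^ j := by
  rcases j with _ | j
  · rfl
  · rw [hSign, if_neg (by omega)]
    rfl

def signedChooseSum (i k : ℕ) : ℤ := ∑ j ∈ range (k + 1), hSign i j * k.choose j

lemma signedChooseSum_succ (i k : ℕ) :
    signedChooseSum i (k + 1) =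
      signedChooseSum i k + ∑ j ∈ range (k + 1), hSign i (j + 1) * k.choose j := by
  simp only [signedChooseSum]
  rw [sum_range_succ' _ (k + 1), sum_range_succ' (fun j => hSign i j * k.choose j)]
  simp only [Nat.choose_succ_succ', Nat.cast_add, mul_add, sum_add_distrib]
  rw [sum_range_succ (fun j => hSign i (j + 1) * (k.choose (j + 1) : ℤ))]
  simp only [Nat.choose_succ_self, Nat.choose_zero_right, Nat.cast_zero, mul_zero, add_zero]
  ring

lemma card_switchBoundedWords_eq_signedChooseSum (i k : ℕ) :
    (#(switchBoundedWords i k) : ℤ) = signedChooseSum i k := by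
  rcases Nat.eq_zero_or_pos k with rfl | hk
  · simp [card_switchBoundedWords_zero, signedChooseSum, hSign_zero_right]
  induction k, hk using Nat.le_induction generalizing i with
  | base =>
    simp [card_switchBoundedWords_one, signedChooseSum, sum_range_succ, hSign_zero_right,
      hSign_one_right]
  | succ k hk ih =>
    rw [card_switchBoundedWords_succ hk, signedChooseSum_succ, Nat.cast_add, ih]
    congr 1
    rcases i with _ | i
    · rw [filter_false_of_mem fun T _ => by omega]
      simp only [hSign_zero_succ, Int.alternating_sum_range_choose_of_ne (by omega : k ≠ 0)]
      rfl
    · simp only [hSign_succ_succ, Nat.add_le_add_iff_right]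
      exact ih i

lemma fB_eq_sum (i d k : ℕ) :
    (fB i d k : ℤ) = ∑ j ∈ range (k + 1), hSign i j * d.choose j * (d - j).choose (k - j) := by
  rw [fB_eq_choose_mul_card, Nat.cast_mul, card_switchBoundedWords_eq_signedChooseSum,
    signedChooseSum, mul_sum]
  refine sum_congr rfl fun j hj => ?_
  have := congrArg (Nat.cast : ℕ → ℤ) (Nat.choose_mul (n := d) (mem_range_succ_iff.1 hj))
  push_cast at this
  linear_combination hSign i j * this

theorem sum_mul_one_add_pow_eq_sum {R : Type*} [CommSemiring R] (h : ℕ → R) (y : R) (d : ℕ) :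
    ∑ j ∈ range (d + 1), h j * (1 + y) ^ (d - j) =
      ∑ k ∈ range (d + 1), (∑ j ∈ range (k + 1), h j * (d - j).choose (k - j)) * y ^ (d - k) := by
  calc _ = ∑ j ∈ range (d + 1), ∑ t ∈ range (d + 1 - j),
          h j * (d - j).choose t * y ^ (d - j - t) := by
        refine sum_congr rfl fun j hj => ?_
        rw [add_pow, mul_sum, show d + 1 - j = d - j + 1 by have := mem_range.1 hj; omega]
        exact sum_congr rfl fun t _ => by rw [one_pow, one_mul]; ring
    _ = ∑ k ∈ range (d + 1), ∑ j ∈ range (k + 1),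
          h j * (d - j).choose (k - j) * y ^ (d - j - (k - j)) :=
        (sum_range_diag_flip (d + 1) fun j t => h j * (d - j).choose t * y ^ (d - j - t)).symm
    _ = _ := by
        refine sum_congr rfl fun k _ => ?_
        rw [sum_mul]
        refine sum_congr rfl fun j hj => ?_
        rw [show d - j - (k - j) = d - k by have := mem_range.1 hj; omega]

open Polynomial in
theorem stmt12_general (d i : ℕ) :
    ∑ j ∈ Finset.range (d + 1),
        C (if j ≤ i + 1 then (d.choose j : ℤ)
           else (-1) ^ (j - i - 1) * d.choose j) * X ^ (d - j) =
      ∑ j ∈ Finset.range (d + 1),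
        C (fB i d j : ℤ) * (X - 1) ^ (d - j) := by
  have hcoeff : ∀ j, (if j ≤ i + 1 then (d.choose j : ℤ) else (-1) ^ (j - i - 1) * d.choose j) =
      hSign i j * d.choose j := fun j => by
    unfold hSign
    split_ifs <;> ring
  simp_rw [hcoeff]
  have hX := sum_mul_one_add_pow_eq_sum (fun j => C (hSign i j * d.choose j)) (X - 1 : ℤ[X]) d
  rw [add_sub_cancel] at hX
  rw [hX]
  refine sum_congr rfl fun k _ => ?_
  rw [fB_eq_sum, map_sum]
  congr 1
  exact sum_congr rfl fun j _ => by simp only [map_mul, map_natCast]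

open Polynomial in
/-- The `h`-numbers of `B(i,d)` (defined by the polynomial relation
`∑ h_j x^{d-j} = ∑ f_{j-1} (x-1)^{d-j}`) are `h_j = C(d,j)` for `j ≤ i+1` and
`h_j = (-1)^{j-i-1} C(d,j)` for `j > i+1`. -/
theorem stmt12 (d i : ℕ) (hd : 1 ≤ d) (hi : i ≤ d - 1) :
    ∑ j ∈ Finset.range (d + 1),
        C (if j ≤ i + 1 then (d.choose j : ℤ)
           else (-1) ^ (j - i - 1) * d.choose j) * X ^ (d - j) =
      ∑ j ∈ Finset.range (d + 1),
        C (fB i d j : ℤ) * (X - 1) ^ (d - j) :=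
  stmt12_general d i
end

section
/- The reduced Euler characteristic of B(i,d) equals (-1)^i, for 0 ≤ i ≤ d-1; equivalently ∑_{j=0}^{d} (-1)^{j-1} f_{j-1}(B(i,d)) = (-1)^i. -/
namespace Stmt13Aux

def vb (σ : Finset (ℕ × Bool)) (j : ℕ) : Option Bool :=
  if (j, true) ∈ σ then some true else if (j, false) ∈ σ then some false else none

def lastDef (v : ℕ → Option Bool) : ℕ → Option Bool
  | 0 => none
  | d + 1 => match v (d + 1) with
    | some b => some b
    | none => lastDef v d

def chg2 : Option Bool → Option Bool → ℕ
  | some b, some c => if b = c then 0 else 1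
  | _, _ => 0

def chgF (v : ℕ → Option Bool) : ℕ → ℕ
  | 0 => 0
  | d + 1 => chgF v d + chg2 (v (d + 1)) (lastDef v d)

def swc (u : ℕ → Bool) : ℕ → ℕ
  | 0 => 0
  | d + 1 => swc u d + (if 1 ≤ d ∧ u d ≠ u (d + 1) then 1 else 0)

lemma swc_eq (u : ℕ → Bool) (d : ℕ) :
    swc u d = ((Finset.Ico 1 d).filter (fun j => u j ≠ u (j + 1))).card := by
  induction d with
  | zero => simp [swc]
  | succ d ih =>
    rcases Nat.eq_zero_or_pos d with h | h
    · subst h; simp [swc]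
    · have hins : Finset.Ico 1 (d + 1) = insert d (Finset.Ico 1 d) := by
        ext x; simp [Finset.mem_Ico]; omega
      have hnm : d ∉ Finset.Ico 1 d := by simp
      rw [swc, ih, hins, Finset.filter_insert]
      by_cases hu : u d ≠ u (d + 1)
      · rw [if_pos hu, Finset.card_insert_of_notMem (by simp [hnm, Finset.mem_filter])]
        have hd0 : ¬d = 0 := by omega
        simp [hd0, hu]
      · rw [if_neg hu]; simp [h, hu]

lemma lastDef_eq_none (v : ℕ → Option Bool) :
    ∀ d, lastDef v d = none → ∀ j, 1 ≤ j → j ≤ d → v j = none := by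
  intro d
  induction d with
  | zero => intro _ j h1 h2; omega
  | succ d ih =>
    intro h j h1 h2
    rcases hv : v (d + 1) with _ | b
    · have hld : lastDef v d = none := by
        rw [lastDef, hv] at h; exact h
      rcases Nat.lt_or_ge j (d + 1) with hj | hj
      · exact ih hld j h1 (by omega)
      · have : j = d + 1 := by omega
        subst this; exact hv
    · rw [lastDef, hv] at h; simp at h

lemma lastDef_pos {v : ℕ → Option Bool} {d : ℕ} {c : Bool}
    (h : lastDef v d = some c) : 1 ≤ d := by
  cases d with
  | zero => simp [lastDef] at h
  | succ d => omega

lemma lastDef_of_some {v : ℕ → Option Bool} {d : ℕ} {b : Bool}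
    (h : v (d + 1) = some b) : lastDef v (d + 1) = some b := by
  rw [lastDef, h]

lemma lastDef_of_none {v : ℕ → Option Bool} {d : ℕ}
    (h : v (d + 1) = none) : lastDef v (d + 1) = lastDef v d := by
  rw [lastDef, h]

lemma lastDef_congr {v w : ℕ → Option Bool} :
    ∀ {d}, (∀ j, 1 ≤ j → j ≤ d → v j = w j) → lastDef v d = lastDef w d := by
  intro d
  induction d with
  | zero => intro _; rfl
  | succ d ih =>
    intro h
    have h1 : v (d + 1) = w (d + 1) := h (d + 1) (by omega) (by omega)
    rw [lastDef, lastDef, h1]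
    rcases hw : w (d + 1) with _ | b
    · exact ih (fun j hj1 hj2 => h j hj1 (by omega))
    · rfl

lemma chgF_congr {v w : ℕ → Option Bool} :
    ∀ {d}, (∀ j, 1 ≤ j → j ≤ d → v j = w j) → chgF v d = chgF w d := by
  intro d
  induction d with
  | zero => intro _; rfl
  | succ d ih =>
    intro h
    have h1 : v (d + 1) = w (d + 1) := h (d + 1) (by omega) (by omega)
    have h2 : ∀ j, 1 ≤ j → j ≤ d → v j = w j := fun j hj1 hj2 => h j hj1 (by omega)
    rw [chgF, chgF, h1, ih h2, lastDef_congr h2]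

-- Lemma A
lemma lemA (u : ℕ → Bool) (v : ℕ → Option Bool)
    (hdom : ∀ j b, v j = some b → u j = b) :
    ∀ d, chgF v d + (if lastDef v d = some (!u d) then 1 else 0) ≤ swc u d := by
  intro d
  induction d with
  | zero => simp [chgF, lastDef, swc]
  | succ d ih =>
    rw [chgF, swc]
    rcases hv : v (d + 1) with _ | b
    · rw [lastDef_of_none hv]
      simp only [chg2]
      rcases hld : lastDef v d with _ | c
      · simp [hld] at ih ⊢; omega
      · rw [hld] at ih
        by_cases hc : c = !u (d + 1)
        · subst hc
          by_cases hud : u d = u (d + 1)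
          · rw [hud] at ih; simp at ih ⊢; omega
          · have hd1 : 1 ≤ d := lastDef_pos hld
            simp [hd1, hud] at ih ⊢; omega
        · simp [hc]; omega
    · have hub : u (d + 1) = b := hdom _ _ hv
      rw [lastDef_of_some hv]
      have : (if some b = some (!u (d + 1)) then 1 else 0) = 0 := by
        simp [hub]
      rw [this]
      rcases hld : lastDef v d with _ | c
      · rw [hld] at ih; simp [chg2] at ih ⊢; omega
      · rw [hld] at ih
        by_cases hc : c = b
        · subst hc; simp [chg2] at ih ⊢; omega
        · have h1 : chg2 (some b) (some c) = 1 := by simp [chg2, Ne.symm hc]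
          rw [h1]
          by_cases hud : u d = b
          · have : c = !u d := by rw [hud]; cases c <;> cases b <;> simp_all
            rw [this] at ih; simp at ih; omega
          · have hd1 : 1 ≤ d := lastDef_pos hld
            have : u d ≠ u (d + 1) := by rw [hub]; exact hud
            simp [hd1, this] at ih ⊢; omega

-- first defined value
def fd (v : ℕ → Option Bool) : ℕ → Option Bool
  | 0 => none
  | d + 1 => match fd v d with
    | some b => some b
    | none => v (d + 1)

lemma fd_mono {v : ℕ → Option Bool} {m : ℕ} {b : Bool} (h : fd v m = some b) :
    ∀ n, m ≤ n → fd v n = some b := by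
  intro n
  induction n with
  | zero =>
    intro h0
    have : m = 0 := by omega
    subst this; exact h
  | succ n ih =>
    intro hmn
    rcases Nat.lt_or_ge m (n + 1) with hm | hm
    · have := ih (by omega)
      rw [fd, this]
    · have : m = n + 1 := by omega
      subst this; exact h

lemma fd_none_of_lastDef_none {v : ℕ → Option Bool} :
    ∀ {d}, lastDef v d = none → fd v d = none := by
  intro d
  induction d with
  | zero => intro _; rfl
  | succ d ih =>
    intro h
    rcases hv : v (d + 1) with _ | b
    · rw [fd, ih (by rwa [lastDef_of_none hv] at h), hv]
    · rw [lastDef_of_some hv] at h; simp at h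

def extW (v : ℕ → Option Bool) (d : ℕ) (j : ℕ) : Bool :=
  (lastDef v j).getD ((fd v d).getD true)

lemma extW_spec {v : ℕ → Option Bool} {d j : ℕ} {b : Bool}
    (hj : 1 ≤ j) (h : v j = some b) : extW v d j = b := by
  obtain ⟨k, rfl⟩ : ∃ k, j = k + 1 := ⟨j - 1, by omega⟩
  rw [extW, lastDef_of_some h]; rfl

lemma lemB (v : ℕ → Option Bool) (d : ℕ) :
    ∀ e, e ≤ d → swc (extW v d) e ≤ chgF v e := by
  intro e
  induction e with
  | zero => intro _; simp [swc, chgF]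
  | succ e ih =>
    intro he
    have ihe := ih (by omega)
    rw [swc, chgF]
    by_cases hs : 1 ≤ e ∧ extW v d e ≠ extW v d (e + 1)
    · obtain ⟨he1, hne⟩ := hs
      have h1 : chg2 (v (e + 1)) (lastDef v e) = 1 := by
        rcases hv : v (e + 1) with _ | b
        · exfalso; apply hne
          rw [extW, extW, lastDef_of_none hv]
        · rcases hld : lastDef v e with _ | c
          · exfalso
            have hfd : fd v e = none := fd_none_of_lastDef_none hld
            have hfd1 : fd v (e + 1) = some b := by rw [fd, hfd, hv]
            have hfdd : fd v d = some b := fd_mono hfd1 d (by omega)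
            apply hne
            rw [extW, extW, lastDef_of_some hv, hld, hfdd]
            rfl
          · have hb : extW v (d) (e+1) = b := extW_spec (by omega) hv
            have hc : extW v d e = c := by rw [extW, hld]; rfl
            have : c ≠ b := by rw [← hb, ← hc]; exact hne
            simp [chg2, Ne.symm this]
      rw [h1]; simp [he1, hne]; omega
    · rw [if_neg hs]; omega

-- vb lemmas
lemma vb_eq_some {σ : Finset (ℕ × Bool)}
    (hpw : ∀ j, ¬((j, true) ∈ σ ∧ (j, false) ∈ σ)) {j : ℕ} {b : Bool} :
    vb σ j = some b ↔ (j, b) ∈ σ := by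
  by_cases h1 : (j, true) ∈ σ <;> by_cases h2 : (j, false) ∈ σ
  · exact absurd ⟨h1, h2⟩ (hpw j)
  all_goals cases b <;> simp [vb, h1, h2]

lemma vb_ne_none {σ : Finset (ℕ × Bool)} {j : ℕ} {c : Bool}
    (h : (j, c) ∈ σ) : vb σ j ≠ none := by
  by_cases h1 : (j, true) ∈ σ <;> by_cases h2 : (j, false) ∈ σ <;>
    cases c <;> simp_all [vb]

lemma vb_none_of {σ : Finset (ℕ × Bool)} {j : ℕ}
    (h1 : (j, true) ∉ σ) (h2 : (j, false) ∉ σ) : vb σ j = none := by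
  simp [vb, h1, h2]

lemma vb_some_mem {σ : Finset (ℕ × Bool)} {j : ℕ} {b : Bool}
    (h : vb σ j = some b) : (j, b) ∈ σ := by
  by_cases h1 : (j, true) ∈ σ <;> by_cases h2 : (j, false) ∈ σ <;>
    simp_all [vb] <;> subst h <;> assumption

lemma mem_facetOf {d : ℕ} {u : ℕ → Bool} {p : ℕ × Bool} :
    p ∈ facetOf d u ↔ p.1 ∈ Finset.Icc 1 d ∧ u p.1 = p.2 := by
  obtain ⟨j, b⟩ := p
  simp only [facetOf, Finset.mem_image, Prod.mk.injEq]
  constructor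
  · rintro ⟨k, hk, rfl, rfl⟩; exact ⟨hk, rfl⟩
  · rintro ⟨hj, hu⟩; exact ⟨j, hj, rfl, hu⟩

lemma mem_facesB {i d : ℕ} {σ : Finset (ℕ × Bool)} :
    σ ∈ facesB i d ↔ σ ⊆ Finset.Icc 1 d ×ˢ (Finset.univ : Finset Bool) ∧
      (∀ j, ¬((j, true) ∈ σ ∧ (j, false) ∈ σ)) ∧ chgF (vb σ) d ≤ i := by
  classical
  rw [facesB, Finset.mem_filter, Finset.mem_powerset]
  constructor
  · rintro ⟨hsub, u, hsw, hsf⟩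
    have hmem : ∀ j b, (j, b) ∈ σ → u j = b := by
      intro j b hjb
      exact (mem_facetOf.mp (hsf hjb)).2
    have hpw : ∀ j, ¬((j, true) ∈ σ ∧ (j, false) ∈ σ) := by
      rintro j ⟨h1, h2⟩
      have := hmem j true h1
      have := hmem j false h2
      simp_all
    refine ⟨hsub, hpw, ?_⟩
    have hdom : ∀ j b, vb σ j = some b → u j = b := by
      intro j b h
      exact hmem j b (vb_some_mem h)
    calc chgF (vb σ) d ≤ chgF (vb σ) d
          + (if lastDef (vb σ) d = some (!u d) then 1 else 0) := by omega
      _ ≤ swc u d := lemA u (vb σ) hdom d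
      _ = (sw d u).card := swc_eq u d
      _ ≤ i := hsw
  · rintro ⟨hsub, hpw, hch⟩
    refine ⟨hsub, extW (vb σ) d, ?_, ?_⟩
    · rw [sw, ← swc_eq]
      exact le_trans (lemB (vb σ) d d le_rfl) hch
    · intro p hp
      obtain ⟨j, b⟩ := p
      have hj : j ∈ Finset.Icc 1 d := (Finset.mem_product.mp (hsub hp)).1
      have hvb : vb σ j = some b := (vb_eq_some hpw).mpr hp
      have hj1 : 1 ≤ j := (Finset.mem_Icc.mp hj).1
      exact mem_facetOf.mpr ⟨hj, extW_spec hj1 hvb⟩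

end Stmt13Aux


namespace Stmt13Aux

lemma vb_erase {σ : Finset (ℕ × Bool)} {m : ℕ} {b : Bool} {j : ℕ} (h : j ≠ m) :
    vb (σ.erase (m, b)) j = vb σ j := by
  by_cases h1 : (j, true) ∈ σ <;> by_cases h2 : (j, false) ∈ σ <;>
    simp [vb, Finset.mem_erase, Prod.ext_iff, h, h1, h2]

lemma vb_insert {σ : Finset (ℕ × Bool)} {m : ℕ} {b : Bool} {j : ℕ} (h : j ≠ m) :
    vb (insert (m, b) σ) j = vb σ j := by
  by_cases h1 : (j, true) ∈ σ <;> by_cases h2 : (j, false) ∈ σ <;>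
    simp [vb, Finset.mem_insert, Prod.ext_iff, h, h1, h2]

lemma vb_insert_self {σ : Finset (ℕ × Bool)} {m : ℕ} {b : Bool}
    (hno : ∀ c, (m, c) ∉ σ) : vb (insert (m, b) σ) m = some b := by
  cases b <;> simp [vb, Finset.mem_insert, hno true, hno false]

lemma chgF_zero {v : ℕ → Option Bool} :
    ∀ {d}, (∀ j, 1 ≤ j → j ≤ d → v j = none) → chgF v d = 0 ∧ lastDef v d = none := by
  intro d
  induction d with
  | zero => intro _; exact ⟨rfl, rfl⟩
  | succ d ih =>
    intro h
    have h1 : v (d + 1) = none := h (d + 1) (by omega) le_rfl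
    have h2 := ih (fun j hj1 hj2 => h j hj1 (by omega))
    constructor
    · rw [chgF, h1, h2.1, h2.2]; rfl
    · rw [lastDef_of_none h1]; exact h2.2

lemma vb_empty (j : ℕ) : vb (∅ : Finset (ℕ × Bool)) j = none := by simp [vb]

lemma col_none {σ : Finset (ℕ × Bool)} {d : ℕ}
    (h : σ ⊆ Finset.Icc 1 d ×ˢ (Finset.univ : Finset Bool)) {j : ℕ}
    (hj : j ∉ Finset.Icc 1 d) : vb σ j = none := by
  refine vb_none_of (fun hm => hj ?_) (fun hm => hj ?_)
  · exact (Finset.mem_product.mp (h hm)).1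
  · exact (Finset.mem_product.mp (h hm)).1

lemma eq_empty_of_lastDef_none {σ : Finset (ℕ × Bool)} {d : ℕ}
    (hsub : σ ⊆ Finset.Icc 1 d ×ˢ (Finset.univ : Finset Bool))
    (h : lastDef (vb σ) d = none) : σ = ∅ := by
  rw [Finset.eq_empty_iff_forall_notMem]
  rintro ⟨j, c⟩ hp
  have hj : j ∈ Finset.Icc 1 d := (Finset.mem_product.mp (hsub hp)).1
  rw [Finset.mem_Icc] at hj
  exact vb_ne_none hp (lastDef_eq_none (vb σ) d h j hj.1 hj.2)

lemma empty_mem_facesB (i d : ℕ) : ∅ ∈ facesB i d := by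
  rw [mem_facesB]
  refine ⟨Finset.empty_subset _, by simp, ?_⟩
  rw [(chgF_zero (fun j _ _ => vb_empty j)).1]
  omega

noncomputable def Asum (i d : ℕ) (b : Bool) : ℤ :=
  ∑ σ ∈ (facesB i d).filter (fun σ => lastDef (vb σ) d = some b), (-1 : ℤ) ^ σ.card

lemma split3 {α : Type*} [DecidableEq α] (s : Finset α) (g : α → Option Bool) (f : α → ℤ) (b : Bool) :
    ∑ x ∈ s, f x =
      (∑ x ∈ s.filter (fun x => g x = none), f x)
      + (∑ x ∈ s.filter (fun x => g x = some b), f x)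
      + (∑ x ∈ s.filter (fun x => g x = some (!b)), f x) := by
  classical
  rw [← Finset.sum_filter_add_sum_filter_not s (fun x => g x = none) f]
  rw [← Finset.sum_filter_add_sum_filter_not (s.filter (fun x => ¬g x = none))
      (fun x => g x = some b) f, Finset.filter_filter, Finset.filter_filter, add_assoc]
  congr 2
  · apply Finset.sum_congr _ (fun _ _ => rfl)
    apply Finset.filter_congr
    intro x _
    rcases hg : g x with _ | c <;> simp [hg]
  · apply Finset.sum_congr _ (fun _ _ => rfl)
    apply Finset.filter_congr
    intro x _
    rcases hg : g x with _ | c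
    · simp [hg]
    · cases b <;> cases c <;> simp [hg]

end Stmt13Aux

namespace Stmt13Aux

lemma notMem_bang {σ : Finset (ℕ × Bool)} {m : ℕ} {b : Bool}
    (hpw : ∀ j, ¬((j, true) ∈ σ ∧ (j, false) ∈ σ)) (hmem : (m, b) ∈ σ) :
    (m, !b) ∉ σ := by
  intro h
  cases b
  · exact hpw m ⟨h, hmem⟩
  · exact hpw m ⟨hmem, h⟩

lemma stepA (i d : ℕ) (b : Bool) :
    ((facesB i (d + 1)).filter (fun σ => lastDef (vb σ) (d + 1) = some b)).filter
        (fun σ => (d + 1, b) ∉ σ)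
      = (facesB i d).filter (fun σ => lastDef (vb σ) d = some b) := by
  ext σ
  simp only [Finset.mem_filter, and_assoc]
  constructor
  · rintro ⟨hf, hld, hnm⟩
    obtain ⟨hsub, hpw, hch⟩ := mem_facesB.mp hf
    have hnb : (d + 1, !b) ∉ σ := by
      intro hmem
      have hv : vb σ (d + 1) = some (!b) := (vb_eq_some hpw).mpr hmem
      rw [lastDef_of_some hv] at hld
      cases b <;> simp at hld
    have ht : (d + 1, true) ∉ σ := by cases b <;> simp_all
    have hfa : (d + 1, false) ∉ σ := by cases b <;> simp_all
    have hvn : vb σ (d + 1) = none := vb_none_of ht hfa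
    have hsub' : σ ⊆ Finset.Icc 1 d ×ˢ (Finset.univ : Finset Bool) := by
      rintro ⟨j, c⟩ hp
      have h1 := (Finset.mem_product.mp (hsub hp)).1
      rw [Finset.mem_Icc] at h1
      have hj : j ≠ d + 1 := by
        rintro rfl
        cases c
        · exact hfa hp
        · exact ht hp
      exact Finset.mem_product.mpr ⟨Finset.mem_Icc.mpr ⟨h1.1, by omega⟩, Finset.mem_univ _⟩
    rw [chgF, hvn] at hch
    rw [lastDef_of_none hvn] at hld
    refine ⟨mem_facesB.mpr ⟨hsub', hpw, ?_⟩, hld⟩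
    simpa [chg2] using hch
  · rintro ⟨hf, hld⟩
    obtain ⟨hsub, hpw, hch⟩ := mem_facesB.mp hf
    have hvn : vb σ (d + 1) = none := col_none hsub (by simp)
    have hsub' : σ ⊆ Finset.Icc 1 (d + 1) ×ˢ (Finset.univ : Finset Bool) :=
      hsub.trans (Finset.product_subset_product (Finset.Icc_subset_Icc_right (by omega))
        (le_refl _))
    refine ⟨mem_facesB.mpr ⟨hsub', hpw, ?_⟩, ?_, ?_⟩
    · rw [chgF, hvn]
      simpa [chg2] using hch
    · rw [lastDef_of_none hvn]; exact hld
    · intro hmem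
      have := (Finset.mem_product.mp (hsub hmem)).1
      rw [Finset.mem_Icc] at this
      omega

lemma stepB1 (i d : ℕ) (b : Bool) :
    ((facesB i (d + 1)).filter (fun σ => lastDef (vb σ) (d + 1) = some b)).filter
        (fun σ => (d + 1, b) ∈ σ)
      = (facesB i (d + 1)).filter (fun σ => (d + 1, b) ∈ σ) := by
  ext σ
  simp only [Finset.mem_filter, and_assoc]
  constructor
  · rintro ⟨hf, _, hm⟩; exact ⟨hf, hm⟩
  · rintro ⟨hf, hm⟩
    obtain ⟨_, hpw, _⟩ := mem_facesB.mp hf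
    exact ⟨hf, by rw [lastDef_of_some ((vb_eq_some hpw).mpr hm)], hm⟩

open Classical in
noncomputable def Hset (i d : ℕ) (b : Bool) : Finset (Finset (ℕ × Bool)) :=
  ((Finset.Icc 1 d ×ˢ (Finset.univ : Finset Bool)).powerset).filter
    (fun σ => (∀ j, ¬((j, true) ∈ σ ∧ (j, false) ∈ σ)) ∧
      chgF (vb σ) d + chg2 (some b) (lastDef (vb σ) d) ≤ i)

lemma mem_Hset {i d : ℕ} {b : Bool} {σ : Finset (ℕ × Bool)} :
    σ ∈ Hset i d b ↔ σ ⊆ Finset.Icc 1 d ×ˢ (Finset.univ : Finset Bool) ∧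
      (∀ j, ¬((j, true) ∈ σ ∧ (j, false) ∈ σ)) ∧
      chgF (vb σ) d + chg2 (some b) (lastDef (vb σ) d) ≤ i := by
  classical
  rw [Hset, Finset.mem_filter, Finset.mem_powerset]

lemma stepB2 (i d : ℕ) (b : Bool) :
    ∑ σ ∈ (facesB i (d + 1)).filter (fun σ => (d + 1, b) ∈ σ), (-1 : ℤ) ^ σ.card
      = ∑ σ ∈ Hset i d b, (-1 : ℤ) ^ (σ.card + 1) := by
  apply Finset.sum_nbij' (fun σ => σ.erase (d + 1, b)) (fun σ => insert (d + 1, b) σ)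
  · intro σ hσ
    rw [Finset.mem_filter] at hσ
    obtain ⟨hf, hmem⟩ := hσ
    obtain ⟨hsub, hpw, hch⟩ := mem_facesB.mp hf
    have hnb : (d + 1, !b) ∉ σ := notMem_bang hpw hmem
    have hsub' : σ.erase (d + 1, b) ⊆ Finset.Icc 1 d ×ˢ (Finset.univ : Finset Bool) := by
      rintro ⟨j, c⟩ hp
      rw [Finset.mem_erase] at hp
      have h1 := (Finset.mem_product.mp (hsub hp.2)).1
      rw [Finset.mem_Icc] at h1
      have hj : j ≠ d + 1 := by
        rintro rfl
        have : c ≠ b := fun hc => hp.1 (by rw [hc])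
        have : c = !b := by cases c <;> cases b <;> simp_all
        exact hnb (this ▸ hp.2)
      exact Finset.mem_product.mpr ⟨Finset.mem_Icc.mpr ⟨h1.1, by omega⟩, Finset.mem_univ _⟩
    have hcongr : ∀ j, 1 ≤ j → j ≤ d → vb (σ.erase (d + 1, b)) j = vb σ j :=
      fun j _ hj => vb_erase (by omega)
    have hvb : vb σ (d + 1) = some b := (vb_eq_some hpw).mpr hmem
    rw [mem_Hset]
    refine ⟨hsub', fun j hj => hpw j ⟨Finset.mem_of_mem_erase hj.1, Finset.mem_of_mem_erase hj.2⟩, ?_⟩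
    rw [chgF_congr hcongr, lastDef_congr hcongr]
    rw [chgF, hvb] at hch
    exact hch
  · intro σ hσ
    obtain ⟨hsub, hpw, hch⟩ := mem_Hset.mp hσ
    have hno : ∀ c, (d + 1, c) ∉ σ := by
      intro c hc
      have := (Finset.mem_product.mp (hsub hc)).1
      rw [Finset.mem_Icc] at this
      omega
    have hcongr : ∀ j, 1 ≤ j → j ≤ d → vb (insert (d + 1, b) σ) j = vb σ j :=
      fun j _ hj => vb_insert (by omega)
    have hsub' : insert (d + 1, b) σ ⊆ Finset.Icc 1 (d + 1) ×ˢ (Finset.univ : Finset Bool) := by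
      rw [Finset.insert_subset_iff]
      refine ⟨Finset.mem_product.mpr ⟨Finset.mem_Icc.mpr ⟨by omega, le_rfl⟩, Finset.mem_univ _⟩, ?_⟩
      exact hsub.trans (Finset.product_subset_product (Finset.Icc_subset_Icc_right (by omega))
        (le_refl _))
    have hpw' : ∀ j, ¬((j, true) ∈ insert (d + 1, b) σ ∧ (j, false) ∈ insert (d + 1, b) σ) := by
      rintro j ⟨h1, h2⟩
      rw [Finset.mem_insert] at h1 h2
      rcases h1 with h1 | h1 <;> rcases h2 with h2 | h2
      · rw [Prod.ext_iff] at h1 h2; simp at h1 h2; simp [h1.2] at h2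
      · rw [Prod.ext_iff] at h1; obtain ⟨rfl, _⟩ := h1; exact hno false h2
      · rw [Prod.ext_iff] at h2; obtain ⟨rfl, _⟩ := h2; exact hno true h1
      · exact hpw j ⟨h1, h2⟩
    rw [Finset.mem_filter]
    refine ⟨mem_facesB.mpr ⟨hsub', hpw', ?_⟩, Finset.mem_insert_self _ _⟩
    rw [chgF, vb_insert_self hno, chgF_congr hcongr, lastDef_congr hcongr]
    exact hch
  · intro σ hσ
    rw [Finset.mem_filter] at hσ
    exact Finset.insert_erase hσ.2
  · intro σ hσ
    obtain ⟨hsub, _, _⟩ := mem_Hset.mp hσ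
    apply Finset.erase_insert
    intro hc
    have := (Finset.mem_product.mp (hsub hc)).1
    rw [Finset.mem_Icc] at this
    omega
  · intro σ hσ
    rw [Finset.mem_filter] at hσ
    rw [Finset.card_erase_of_mem hσ.2,
      Nat.sub_add_cancel (Finset.card_pos.mpr ⟨_, hσ.2⟩)]

end Stmt13Aux

namespace Stmt13Aux

lemma chg2_same (b : Bool) : chg2 (some b) (some b) = 0 := by simp [chg2]

lemma chg2_diff (b : Bool) : chg2 (some b) (some (!b)) = 1 := by cases b <;> simp [chg2]

lemma chg2_none (b : Bool) : chg2 (some b) none = 0 := rfl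

lemma sum_pow_succ (t : Finset (Finset (ℕ × Bool))) :
    ∑ σ ∈ t, (-1 : ℤ) ^ (σ.card + 1) = -∑ σ ∈ t, (-1 : ℤ) ^ σ.card := by
  rw [← Finset.sum_neg_distrib]
  exact Finset.sum_congr rfl (fun σ _ => by rw [pow_succ]; ring)

lemma lastDef_vb_empty (d : ℕ) : lastDef (vb (∅ : Finset (ℕ × Bool))) d = none :=
  (chgF_zero (fun j _ _ => vb_empty j)).2

lemma chgF_vb_empty (d : ℕ) : chgF (vb (∅ : Finset (ℕ × Bool))) d = 0 :=
  (chgF_zero (fun j _ _ => vb_empty j)).1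

lemma Hset_none (i d : ℕ) (b : Bool) :
    (Hset i d b).filter (fun σ => lastDef (vb σ) d = none) = {∅} := by
  ext σ
  simp only [Finset.mem_filter, Finset.mem_singleton]
  constructor
  · rintro ⟨hH, hld⟩
    exact eq_empty_of_lastDef_none (mem_Hset.mp hH).1 hld
  · rintro rfl
    refine ⟨mem_Hset.mpr ⟨Finset.empty_subset _, by simp, ?_⟩, lastDef_vb_empty d⟩
    rw [chgF_vb_empty, lastDef_vb_empty, chg2_none]
    omega

lemma Hset_some_same (i d : ℕ) (b : Bool) :
    (Hset i d b).filter (fun σ => lastDef (vb σ) d = some b)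
      = (facesB i d).filter (fun σ => lastDef (vb σ) d = some b) := by
  ext σ
  simp only [Finset.mem_filter]
  constructor
  · rintro ⟨hH, hld⟩
    obtain ⟨hsub, hpw, hch⟩ := mem_Hset.mp hH
    rw [hld, chg2_same] at hch
    exact ⟨mem_facesB.mpr ⟨hsub, hpw, by omega⟩, hld⟩
  · rintro ⟨hf, hld⟩
    obtain ⟨hsub, hpw, hch⟩ := mem_facesB.mp hf
    exact ⟨mem_Hset.mpr ⟨hsub, hpw, by rw [hld, chg2_same]; omega⟩, hld⟩

lemma Hset_some_diff_zero (d : ℕ) (b : Bool) :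
    (Hset 0 d b).filter (fun σ => lastDef (vb σ) d = some (!b)) = ∅ := by
  rw [Finset.eq_empty_iff_forall_notMem]
  rintro σ hσ
  rw [Finset.mem_filter] at hσ
  obtain ⟨hH, hld⟩ := hσ
  obtain ⟨-, -, hch⟩ := mem_Hset.mp hH
  rw [hld, chg2_diff] at hch
  omega

lemma Hset_some_diff (i d : ℕ) (b : Bool) (hi : 1 ≤ i) :
    (Hset i d b).filter (fun σ => lastDef (vb σ) d = some (!b))
      = (facesB (i - 1) d).filter (fun σ => lastDef (vb σ) d = some (!b)) := by
  ext σ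
  simp only [Finset.mem_filter]
  constructor
  · rintro ⟨hH, hld⟩
    obtain ⟨hsub, hpw, hch⟩ := mem_Hset.mp hH
    rw [hld, chg2_diff] at hch
    exact ⟨mem_facesB.mpr ⟨hsub, hpw, by omega⟩, hld⟩
  · rintro ⟨hf, hld⟩
    obtain ⟨hsub, hpw, hch⟩ := mem_facesB.mp hf
    exact ⟨mem_Hset.mpr ⟨hsub, hpw, by rw [hld, chg2_diff]; omega⟩, hld⟩

lemma Asum_succ (i d : ℕ) (b : Bool) :
    Asum i (d + 1) b = -1 - (if i = 0 then 0 else Asum (i - 1) d (!b)) := by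
  have hsplit := (Finset.sum_filter_add_sum_filter_not
    ((facesB i (d + 1)).filter (fun σ => lastDef (vb σ) (d + 1) = some b))
    (fun σ => (d + 1, b) ∈ σ) (fun σ => (-1 : ℤ) ^ σ.card)).symm
  rw [Asum, hsplit, stepB1, stepB2, stepA]
  rw [sum_pow_succ, split3 (Hset i d b) (fun σ => lastDef (vb σ) d) _ b]
  rw [Hset_none, Hset_some_same]
  rcases Nat.eq_zero_or_pos i with hi | hi
  · subst hi
    rw [Hset_some_diff_zero]
    simp [Asum]
  · rw [Hset_some_diff i d b hi, if_neg (by omega)]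
    simp only [Finset.sum_singleton, Finset.card_empty, pow_zero, Asum]
    ring

lemma Asum_closed : ∀ i d : ℕ, ∀ b : Bool, i < d →
    Asum i d b = if Even i then -1 else 0 := by
  intro i
  induction i with
  | zero =>
    intro d b h
    obtain ⟨d', rfl⟩ : ∃ d', d = d' + 1 := ⟨d - 1, by omega⟩
    rw [Asum_succ]
    simp
  | succ i ih =>
    intro d b h
    obtain ⟨d', rfl⟩ : ∃ d', d = d' + 1 := ⟨d - 1, by omega⟩
    rw [Asum_succ, if_neg (by omega), Nat.add_sub_cancel, ih d' (!b) (by omega)]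
    rcases Nat.even_or_odd i with he | ho
    · rw [if_pos he, if_neg (by simp [Nat.even_add_one, he])]
      ring
    · have hne : ¬Even i := Nat.not_even_iff_odd.mpr ho
      rw [if_neg hne, if_pos (Nat.even_add_one.mpr hne)]
      ring

lemma faces_lastDef_none (i d : ℕ) :
    (facesB i d).filter (fun σ => lastDef (vb σ) d = none) = {∅} := by
  ext σ
  simp only [Finset.mem_filter, Finset.mem_singleton]
  constructor
  · rintro ⟨hf, hld⟩
    exact eq_empty_of_lastDef_none (mem_facesB.mp hf).1 hld
  · rintro rfl
    exact ⟨empty_mem_facesB i d, lastDef_vb_empty d⟩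

lemma total (i d : ℕ) (h : i < d) :
    ∑ σ ∈ facesB i d, (-1 : ℤ) ^ σ.card = (-1 : ℤ) ^ (i + 1) := by
  rw [split3 (facesB i d) (fun σ => lastDef (vb σ) d) _ true]
  rw [faces_lastDef_none]
  rw [show (∑ σ ∈ (facesB i d).filter (fun σ => lastDef (vb σ) d = some true),
    (-1 : ℤ) ^ σ.card) = Asum i d true from rfl]
  rw [show (∑ σ ∈ (facesB i d).filter (fun σ => lastDef (vb σ) d = some !true),
    (-1 : ℤ) ^ σ.card) = Asum i d false from rfl]
  rw [Asum_closed i d true h, Asum_closed i d false h]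
  simp only [Finset.sum_singleton, Finset.card_empty, pow_zero]
  rcases Nat.even_or_odd i with he | ho
  · rw [if_pos he, (he.add_one).neg_one_pow]
    ring
  · rw [if_neg (Nat.not_even_iff_odd.mpr ho), (ho.add_one).neg_one_pow]
    ring

end Stmt13Aux


/-- The reduced Euler characteristic of `B(i,d)` equals `(-1)^i`:
`∑_{j=0}^{d} (-1)^{j-1} f_{j-1}(B(i,d)) = (-1)^i`. -/
theorem stmt13 (d i : ℕ) (hd : 1 ≤ d) (hi : i ≤ d - 1) :
    ∑ j ∈ Finset.range (d + 1), (-1 : ℤ) ^ (j + 1) * fB i d j = (-1) ^ i := by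
  classical
  have hid : i < d := by omega
  have hmap : ∀ σ ∈ facesB i d, σ.card ∈ Finset.range (d + 1) := by
    intro σ hσ
    rw [facesB, Finset.mem_filter] at hσ
    obtain ⟨-, u, -, hsf⟩ := hσ
    rw [Finset.mem_range]
    have h1 : σ.card ≤ (facetOf d u).card := Finset.card_le_card hsf
    have h2 : (facetOf d u).card ≤ (Finset.Icc 1 d).card := Finset.card_image_le
    rw [Nat.card_Icc] at h2
    omega
  have hfib := Finset.sum_fiberwise_of_maps_to hmap (fun σ => (-1 : ℤ) ^ (σ.card + 1))
  have hL : ∑ j ∈ Finset.range (d + 1), (-1 : ℤ) ^ (j + 1) * fB i d j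
      = ∑ σ ∈ facesB i d, (-1 : ℤ) ^ (σ.card + 1) := by
    rw [← hfib]
    apply Finset.sum_congr rfl
    intro j hj
    rw [Finset.sum_congr rfl (fun σ hσ => by rw [(Finset.mem_filter.mp hσ).2]),
      Finset.sum_const, nsmul_eq_mul, mul_comm, fB]
  rw [hL, Stmt13Aux.sum_pow_succ, Stmt13Aux.total i d hid, pow_succ]
  ring
end

section
/- For 0 ≤ i ≤ d-1, the complex B(i,d) contains the entire i-skeleton of the boundary of the d-dimensional cross-polytope: every face σ of the cross-polytope boundary with |σ| ≤ i+1 is a face of B(i,d). -/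
def nextMem (S : Finset ℕ) (j : ℕ) : ℕ :=
  if h : (S.filter (j ≤ ·)).Nonempty then (S.filter (j ≤ ·)).min' h else S.sup id

section nextMem

variable {S : Finset ℕ} {j : ℕ}

theorem nextMem_of_mem (hj : j ∈ S) : nextMem S j = j := by
  have hmem : j ∈ S.filter (j ≤ ·) := Finset.mem_filter.mpr ⟨hj, le_rfl⟩
  rw [nextMem, dif_pos ⟨j, hmem⟩]
  exact le_antisymm (Finset.min'_le _ _ hmem)
    (Finset.le_min' _ _ _ fun k hk => (Finset.mem_filter.mp hk).2)

theorem nextMem_succ_of_notMem (hj : j ∉ S) : nextMem S (j + 1) = nextMem S j := by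
  have hfilter : S.filter (j + 1 ≤ ·) = S.filter (j ≤ ·) := by
    refine Finset.filter_congr fun k hk => ?_
    have : k ≠ j := fun h => hj (h ▸ hk)
    omega
  simp only [nextMem, hfilter]

theorem nextMem_of_sup_lt (hj : S.sup id < j) : nextMem S j = S.sup id := by
  have hfilter : S.filter (j ≤ ·) = ∅ :=
    Finset.filter_eq_empty_iff.mpr fun k hk =>
      not_le.mpr ((Finset.le_sup (f := id) hk).trans_lt hj)
  simp [nextMem, hfilter]

end nextMem

theorem sw_comp_nextMem_subset (d : ℕ) (g : ℕ → Bool) (S : Finset ℕ) :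
    sw d (g ∘ nextMem S) ⊆ S.erase (S.sup id) := by
  intro j hj
  have hswitch : g (nextMem S j) ≠ g (nextMem S (j + 1)) := (Finset.mem_filter.mp hj).2
  have hjS : j ∈ S := by
    by_contra hjS
    exact hswitch (by rw [nextMem_succ_of_notMem hjS])
  refine Finset.mem_erase.mpr ⟨fun hsup => hswitch ?_, hjS⟩
  rw [nextMem_of_mem hjS, nextMem_of_sup_lt (by omega), hsup]

theorem card_erase_sup_id {α : Type*} [LinearOrder α] [OrderBot α] (S : Finset α) :
    (S.erase (S.sup id)).card = S.card - 1 := by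
  rcases S.eq_empty_or_nonempty with rfl | hS
  · simp
  · obtain ⟨a, ha, hsup⟩ := S.exists_mem_eq_sup hS id
    rw [hsup]
    exact Finset.card_erase_of_mem ha

theorem card_sw_comp_nextMem_le (d : ℕ) (g : ℕ → Bool) (S : Finset ℕ) :
    (sw d (g ∘ nextMem S)).card ≤ S.card - 1 :=
  card_erase_sup_id S ▸ Finset.card_le_card (sw_comp_nextMem_subset d g S)

theorem mem_facetOf {d : ℕ} {u : ℕ → Bool} {j : ℕ} {b : Bool} :
    (j, b) ∈ facetOf d u ↔ j ∈ Finset.Icc 1 d ∧ u j = b := by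
  simp [facetOf]

theorem stmt14_general (d i : ℕ)
    (σ : Finset (ℕ × Bool))
    (hσ : σ ⊆ Finset.Icc 1 d ×ˢ (Finset.univ : Finset Bool))
    (hone : ∀ j : ℕ, ¬((j, true) ∈ σ ∧ (j, false) ∈ σ))
    (hcard : σ.card ≤ i + 1) :
    ∃ u : ℕ → Bool, (sw d u).card ≤ i ∧ σ ⊆ facetOf d u := by
  set S := σ.image Prod.fst
  let letter : ℕ → Bool := fun j => decide ((j, true) ∈ σ)
  refine ⟨letter ∘ nextMem S, ?_, ?_⟩
  · have hS : S.card ≤ σ.card := Finset.card_image_le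
    have := card_sw_comp_nextMem_le d letter S
    omega
  · rintro ⟨j, b⟩ hjb
    have hletter : letter j = b := by
      cases b
      · exact decide_eq_false fun h => hone j ⟨h, hjb⟩
      · exact decide_eq_true hjb
    refine mem_facetOf.mpr ⟨(Finset.mem_product.mp (hσ hjb)).1, ?_⟩
    rw [Function.comp_apply, nextMem_of_mem (Finset.mem_image_of_mem Prod.fst hjb), hletter]

/-- `B(i,d)` contains the whole `i`-skeleton of the boundary of the
`d`-cross-polytope: every face `σ` of the cross-polytope boundary (a set of
vertices with at most one of `x_j, y_j` for each position `j`) with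
`|σ| ≤ i+1` is a face of `B(i,d)`. -/
theorem stmt14 (d i : ℕ) (hd : 1 ≤ d) (hi : i ≤ d - 1)
    (σ : Finset (ℕ × Bool))
    (hσ : σ ⊆ Finset.Icc 1 d ×ˢ (Finset.univ : Finset Bool))
    (hone : ∀ j : ℕ, ¬((j, true) ∈ σ ∧ (j, false) ∈ σ))
    (hcard : σ.card ≤ i + 1) :
    ∃ u : ℕ → Bool, (sw d u).card ≤ i ∧ σ ⊆ facetOf d u :=
  stmt14_general d i σ hσ hone hcard
end

section
/- A face σ of the boundary of the d-dimensional cross-polytope belongs to B(i,d) if and only if the filling Fill_d(σ) has switch set of size at most i; moreover for any facet τ' ⊇ σ, |S(Fill_d(σ))| ≤ |S(τ')|. -/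
/-- The word of the filling of the face with selected positions `J` and
letters `z`: each position `j` takes the letter of the smallest selected
position `≥ j`, and positions above the largest selected position take its
letter. -/
def fillWord (J : Finset ℕ) (z : ℕ → Bool) : ℕ → Bool :=
  fun j =>
    if h : (J.filter (fun k => j ≤ k)).Nonempty then
      z ((J.filter (fun k => j ≤ k)).min' h)
    else if h2 : J.Nonempty then z (J.max' h2) else false

/-!
A switch `j` of the filling can only occur at a selected position `j ∈ J` whose successor `k` in
`J` carries the other letter, because the filling is constant on every stretch of unselected
positions and after the last selected one. Any facet containing `σ` agrees with the filling on
`J`, so its word also changes letter somewhere in `[j, k)`; these intervals are disjoint for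
distinct switches `j`, which yields an injection of the switches of the filling into those of
the facet. The filling itself is a facet containing `σ`, which gives the equivalence.
-/

section FillWord

variable (J : Finset ℕ) (z : ℕ → Bool)

lemma fillWord_of_mem {j : ℕ} (hj : j ∈ J) : fillWord J z j = z j := by
  have hmem : j ∈ J.filter (j ≤ ·) := Finset.mem_filter.mpr ⟨hj, le_rfl⟩
  have hne : (J.filter (j ≤ ·)).Nonempty := ⟨j, hmem⟩
  have hmin : (J.filter (j ≤ ·)).min' hne = j :=
    le_antisymm (Finset.min'_le _ j hmem) (Finset.mem_filter.mp (Finset.min'_mem _ hne)).2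
  rw [fillWord, dif_pos hne, hmin]

lemma fillWord_succ_of_not_mem {j : ℕ} (hj : j ∉ J) : fillWord J z (j + 1) = fillWord J z j := by
  have hfilter : J.filter (j + 1 ≤ ·) = J.filter (j ≤ ·) :=
    Finset.filter_congr fun k hk => ⟨by omega, fun hjk => by
      rcases hjk.eq_or_lt with rfl | hlt
      · exact absurd hk hj
      · exact hlt⟩
  unfold fillWord
  rw [hfilter]

lemma fillWord_of_max'_lt (hJ : J.Nonempty) {j : ℕ} (hj : J.max' hJ < j) :
    fillWord J z j = z (J.max' hJ) := by
  have hempty : ¬ (J.filter (j ≤ ·)).Nonempty := fun ⟨k, hk⟩ => by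
    obtain ⟨hkJ, hjk⟩ := Finset.mem_filter.mp hk
    exact absurd (J.le_max' k hkJ) (by omega)
  rw [fillWord, dif_neg hempty, dif_pos hJ]

lemma fillWord_succ_of_next {j k : ℕ} (hkJ : k ∈ J) (hjk : j < k)
    (hnext : ∀ m ∈ J, j < m → k ≤ m) : fillWord J z (j + 1) = z k := by
  have hmem : k ∈ J.filter (j + 1 ≤ ·) := Finset.mem_filter.mpr ⟨hkJ, hjk⟩
  have hne : (J.filter (j + 1 ≤ ·)).Nonempty := ⟨k, hmem⟩
  have hmin : (J.filter (j + 1 ≤ ·)).min' hne = k := by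
    obtain ⟨hJ', hle⟩ := Finset.mem_filter.mp (Finset.min'_mem _ hne)
    exact le_antisymm (Finset.min'_le _ k hmem) (hnext _ hJ' hle)
  rw [fillWord, dif_pos hne, hmin]

lemma exists_next_of_fillWord_ne {j : ℕ} (hj : fillWord J z j ≠ fillWord J z (j + 1)) :
    j ∈ J ∧ ∃ k ∈ J, j < k ∧ z j ≠ z k ∧ ∀ m ∈ J, j < m → k ≤ m := by
  have hjJ : j ∈ J := by
    by_contra hjJ
    exact hj (fillWord_succ_of_not_mem J z hjJ).symm
  have hlater : (J.filter (j < ·)).Nonempty := by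
    by_contra hnone
    have hmax : J.max' ⟨j, hjJ⟩ = j := le_antisymm
      (Finset.max'_le _ _ _ fun m hm => not_lt.mp fun hjm =>
        hnone ⟨m, Finset.mem_filter.mpr ⟨hm, hjm⟩⟩)
      (J.le_max' j hjJ)
    apply hj
    rw [fillWord_of_mem J z hjJ, fillWord_of_max'_lt J z ⟨j, hjJ⟩ (by rw [hmax]; exact j.lt_succ_self), hmax]
  set k := (J.filter (j < ·)).min' hlater
  obtain ⟨hkJ, hjk⟩ := Finset.mem_filter.mp (Finset.min'_mem _ hlater)
  have hnext : ∀ m ∈ J, j < m → k ≤ m := fun m hm hjm =>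
    Finset.min'_le _ m (Finset.mem_filter.mpr ⟨hm, hjm⟩)
  refine ⟨hjJ, k, hkJ, hjk, ?_, hnext⟩
  rwa [← fillWord_of_mem J z hjJ, ← fillWord_succ_of_next J z hkJ hjk hnext]

end FillWord

lemma exists_ne_succ_of_ne (u : ℕ → Bool) {a b : ℕ} (hab : a ≤ b) (hne : u a ≠ u b) :
    ∃ l, a ≤ l ∧ l < b ∧ u l ≠ u (l + 1) := by
  induction b, hab using Nat.le_induction with
  | base => exact absurd rfl hne
  | succ b hab ih =>
    by_cases hb : u b = u (b + 1)
    · obtain ⟨l, hal, hlb, hl⟩ := ih (hb ▸ hne)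
      exact ⟨l, hal, by omega, hl⟩
    · exact ⟨b, hab, by omega, hb⟩

lemma card_sw_fillWord_le {d : ℕ} {J : Finset ℕ} (hJd : J ⊆ Finset.Icc 1 d) {z u : ℕ → Bool}
    (hu : ∀ j ∈ J, u j = z j) : (sw d (fillWord J z)).card ≤ (sw d u).card := by
  have hswitch : ∀ j ∈ sw d (fillWord J z), ∃ k l, j < k ∧ (∀ m ∈ J, j < m → k ≤ m) ∧
      j ≤ l ∧ l < k ∧ l ∈ sw d u := by
    intro j hj
    obtain ⟨⟨hj1, -⟩, hjsw⟩ := Finset.mem_filter.mp hj |>.imp_left Finset.mem_Ico.mp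
    obtain ⟨hjJ, k, hkJ, hjk, hzjk, hnext⟩ := exists_next_of_fillWord_ne J z hjsw
    obtain ⟨l, hjl, hlk, hl⟩ :=
      exists_ne_succ_of_ne u hjk.le (by rwa [hu j hjJ, hu k hkJ])
    have hkd := (Finset.mem_Icc.mp (hJd hkJ)).2
    exact ⟨k, l, hjk, hnext, hjl, hlk,
      Finset.mem_filter.mpr ⟨Finset.mem_Ico.mpr ⟨by omega, by omega⟩, hl⟩⟩
  choose! k l hk using hswitch
  have hmono : StrictMonoOn l (sw d (fillWord J z)) := by
    intro a ha b hb hab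
    obtain ⟨-, hanext, -, hlk, -⟩ := hk a ha
    obtain ⟨hbJ, -⟩ := exists_next_of_fillWord_ne J z (Finset.mem_filter.mp hb).2
    have := hanext b hbJ hab
    have := (hk b hb).2.2.1
    omega
  exact Finset.card_le_card_of_injOn l (fun j hj => (hk j hj).2.2.2.2) hmono.injOn

lemma image_subset_facetOf_iff {d : ℕ} {J : Finset ℕ} (hJd : J ⊆ Finset.Icc 1 d)
    (z u : ℕ → Bool) :
    J.image (fun j => (j, z j)) ⊆ facetOf d u ↔ ∀ j ∈ J, u j = z j := by
  simp only [facetOf, Finset.image_subset_iff, Finset.mem_image, Prod.mk.injEq]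
  constructor
  · rintro h j hj
    obtain ⟨a, -, rfl, ha⟩ := h j hj
    exact ha
  · exact fun h j hj => ⟨j, hJd hj, rfl, h j hj⟩

theorem stmt15_general (d i : ℕ) (J : Finset ℕ)
    (hJd : J ⊆ Finset.Icc 1 d) (z : ℕ → Bool) :
    ((∃ u : ℕ → Bool, (sw d u).card ≤ i ∧
        J.image (fun j => (j, z j)) ⊆ facetOf d u) ↔
      (sw d (fillWord J z)).card ≤ i) ∧
    ∀ u : ℕ → Bool, J.image (fun j => (j, z j)) ⊆ facetOf d u →
      (sw d (fillWord J z)).card ≤ (sw d u).card := by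
  have hmin : ∀ u, J.image (fun j => (j, z j)) ⊆ facetOf d u →
      (sw d (fillWord J z)).card ≤ (sw d u).card := fun u hu =>
    card_sw_fillWord_le hJd ((image_subset_facetOf_iff hJd z u).mp hu)
  refine ⟨⟨fun ⟨u, hcard, hu⟩ => (hmin u hu).trans hcard, fun hcard => ?_⟩, hmin⟩
  exact ⟨fillWord J z, hcard,
    (image_subset_facetOf_iff hJd z _).mpr fun j hj => fillWord_of_mem J z hj⟩

/-- A face `σ = {(j, z j) : j ∈ J}` of the cross-polytope boundary is a face
of `B(i,d)` iff its filling has at most `i` switches; moreover the filling has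
the fewest switches among all facets containing `σ`. -/
theorem stmt15 (d i : ℕ) (hd : 1 ≤ d) (J : Finset ℕ) (hJ : J.Nonempty)
    (hJd : J ⊆ Finset.Icc 1 d) (z : ℕ → Bool) :
    ((∃ u : ℕ → Bool, (sw d u).card ≤ i ∧
        J.image (fun j => (j, z j)) ⊆ facetOf d u) ↔
      (sw d (fillWord J z)).card ≤ i) ∧
    ∀ u : ℕ → Bool, J.image (fun j => (j, z j)) ⊆ facetOf d u →
      (sw d (fillWord J z)).card ≤ (sw d u).card :=
  stmt15_general d i J hJd z
end

section
/- For 0 ≤ i ≤ d-1 and 0 ≤ j ≤ d, the alternating partial binomial sum identity implied by the h-vector computation holds: ∑_{k=0}^{j} (-1)^{j-k} C(d-k, j-k) · (number of faces of B(i,d) of cardinality k) equals C(d,j) when j ≤ i+1, where the number of faces of cardinality k of B(i,d) equals the number of k-subsets σ of positions with sign choices whose filling has at most i switches; in particular for j ≤ i+1 this number of faces of cardinality k equals 2^k C(d,k) (all k-element faces of the cross-polytope are present). -/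
/-!
A set of signed positions lies in a facet of the cross-polytope iff it uses each position at
most once. Such a set `σ` with at most `i + 1` elements is a face of `B(i,d)`: read off a word
that takes the prescribed sign at each position of `σ` and, between two consecutive positions,
switches at most once, so at most `#σ - 1 ≤ i` times. Hence `B(i,d)` has all
`2 ^ k * d.choose k` faces of size `k ≤ i + 1`, and the alternating sum collapses, via
`C(d-k, j-k) C(d,k) = C(d,j) C(j,k)`, to `C(d,j) (2 - 1) ^ j`.
-/

open Finset

lemma mem_iff_of_injOn_fst {α : Type*} {σ : Finset (α × Bool)}
    (hσ : Set.InjOn Prod.fst (σ : Set (α × Bool))) {a : α} {b c : Bool} (h : (a, b) ∈ σ) :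
    (a, c) ∈ σ ↔ b = c :=
  ⟨fun hc => congrArg Prod.snd (hσ h hc rfl), by rintro rfl; exact h⟩

section PartialSign

variable {α : Type*} [DecidableEq α]

def partialSign (S T : Finset α) : Finset (α × Bool) :=
  S.image fun a => (a, decide (a ∈ T))

def positivePart (σ : Finset (α × Bool)) : Finset α :=
  (σ.image Prod.fst).filter fun a => (a, true) ∈ σ

lemma mem_partialSign {S T : Finset α} {a : α} {b : Bool} :
    (a, b) ∈ partialSign S T ↔ a ∈ S ∧ decide (a ∈ T) = b := by
  simp [partialSign]

lemma image_fst_partialSign (S T : Finset α) : (partialSign S T).image Prod.fst = S := by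
  simp [partialSign, image_image, Function.comp_def]

lemma positivePart_partialSign {S T : Finset α} (hTS : T ⊆ S) :
    positivePart (partialSign S T) = T := by
  ext a
  simp only [positivePart, image_fst_partialSign, mem_filter, mem_partialSign,
    decide_eq_true_eq]
  exact ⟨fun h => h.2.2, fun h => ⟨hTS h, hTS h, h⟩⟩

lemma partialSign_image_fst_positivePart {σ : Finset (α × Bool)}
    (hσ : Set.InjOn Prod.fst (σ : Set (α × Bool))) :
    partialSign (σ.image Prod.fst) (positivePart σ) = σ := by
  ext ⟨a, b⟩
  simp only [mem_partialSign, positivePart, mem_filter, mem_image, Prod.exists,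
    exists_and_right, exists_eq_right]
  constructor
  · rintro ⟨⟨c, hc⟩, rfl⟩
    by_cases ht : (a, true) ∈ σ <;> simp_all [mem_iff_of_injOn_fst hσ hc]
  · intro h
    exact ⟨⟨b, h⟩, by simp [mem_iff_of_injOn_fst hσ h]⟩

lemma injOn_fst_partialSign (S T : Finset α) :
    Set.InjOn Prod.fst (partialSign S T : Set (α × Bool)) := by
  rintro ⟨a, b⟩ hab ⟨a', b'⟩ hab' (rfl : a = a')
  rw [mem_coe, mem_partialSign] at hab hab'
  rw [← hab.2, ← hab'.2]

lemma card_partialSign (S T : Finset α) : #(partialSign S T) = #S :=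
  card_image_of_injective _ fun _ _ h => congrArg Prod.fst h

theorem card_filter_injOn_fst_powerset (A : Finset α) (k : ℕ) :
    #{σ ∈ (A ×ˢ (univ : Finset Bool)).powerset |
        #σ = k ∧ Set.InjOn Prod.fst (σ : Set (α × Bool))} = 2 ^ k * (#A).choose k := by
  have hsigma : #((A.powersetCard k).sigma powerset) = 2 ^ k * (#A).choose k := by
    rw [card_sigma, sum_congr rfl fun S hS => by rw [card_powerset, (mem_powersetCard.1 hS).2],
      sum_const, card_powersetCard, smul_eq_mul, mul_comm]
  rw [← hsigma]
  symm
  -- a partial sign vector is determined by its support `S` and its positive part `T ⊆ S`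
  refine card_bij (fun p _ => partialSign p.1 p.2) ?maps ?inj ?surj
  case maps =>
    rintro ⟨S, T⟩ hST
    simp only [mem_sigma, mem_powersetCard, mem_powerset] at hST
    refine mem_filter.2 ⟨mem_powerset.2 ?_, by rw [card_partialSign, hST.1.2],
      injOn_fst_partialSign S T⟩
    rintro ⟨a, b⟩ hab
    exact mem_product.2 ⟨hST.1.1 (mem_partialSign.1 hab).1, mem_univ b⟩
  case inj =>
    rintro ⟨S, T⟩ hST ⟨S', T'⟩ hST' h
    simp only [mem_sigma, mem_powersetCard, mem_powerset] at hST hST'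
    have hS : S = S' := by
      rw [← image_fst_partialSign S T, ← image_fst_partialSign S' T']; simp only [h]
    have hT : T = T' := by
      rw [← positivePart_partialSign hST.2, ← positivePart_partialSign hST'.2]; simp only [h]
    subst hS hT; rfl
  case surj =>
    intro σ hσ
    simp only [mem_filter, mem_powerset] at hσ
    obtain ⟨hsub, hcard, hinj⟩ := hσ
    refine ⟨⟨σ.image Prod.fst, positivePart σ⟩, ?_, partialSign_image_fst_positivePart hinj⟩
    simp only [mem_sigma, mem_powersetCard, mem_powerset]
    refine ⟨⟨?_, by rw [card_image_of_injOn hinj, hcard]⟩, filter_subset _ _⟩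
    intro a ha
    obtain ⟨p, hp, rfl⟩ := mem_image.1 ha
    exact (mem_product.1 (hsub hp)).1

end PartialSign

lemma exists_eqOn_card_sw_le (d : ℕ) (S : Finset ℕ) (v : ℕ → Bool) :
    ∃ u : ℕ → Bool, (∀ j ∈ S, u j = v j) ∧ #(sw d u) ≤ #S - 1 := by
  induction S using Finset.induction_on_max with
  | empty => exact ⟨fun _ => true, by simp, by simp [sw]⟩
  | insert a s hlt ih =>
    have ha : a ∉ s := fun h => (hlt a h).false
    rcases s.eq_empty_or_nonempty with rfl | hs
    · exact ⟨fun _ => v a, by simp, by simp [sw]⟩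
    obtain ⟨u, hu, hsw⟩ := ih
    refine ⟨fun m => if m < a then u m else v a, ?_, ?_⟩
    · intro j hj
      rcases mem_insert.1 hj with rfl | hj
      · simp
      · simp [hlt j hj, hu j hj]
    · have hsub : sw d (fun m => if m < a then u m else v a) ⊆ insert (a - 1) (sw d u) := by
        intro j
        simp only [sw, mem_filter, mem_insert, mem_Ico]
        intro ⟨hj, hne⟩
        split_ifs at hne with h₁ h₂
        · exact Or.inr ⟨hj, hne⟩
        all_goals first | omega | exact absurd rfl hne
      calc #(sw d _) ≤ #(insert (a - 1) (sw d u)) := card_le_card hsub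
        _ ≤ #(sw d u) + 1 := card_insert_le _ _
        _ ≤ #(insert a s) - 1 := by rw [card_insert_of_notMem ha]; have := hs.card_pos; omega

lemma injOn_fst_facetOf (d : ℕ) (u : ℕ → Bool) :
    Set.InjOn Prod.fst (facetOf d u : Set (ℕ × Bool)) := by
  simp only [facetOf, coe_image]
  rintro _ ⟨a, -, rfl⟩ _ ⟨b, -, rfl⟩ (rfl : a = b)
  rfl

lemma mem_facesB_iff {i d : ℕ} {σ : Finset (ℕ × Bool)} (hσ : #σ ≤ i + 1) :
    σ ∈ facesB i d ↔
      σ ∈ (Icc 1 d ×ˢ univ).powerset ∧ Set.InjOn Prod.fst (σ : Set (ℕ × Bool)) := by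
  simp only [facesB, mem_filter]
  refine ⟨fun ⟨hpow, u, _, hu⟩ => ⟨hpow, (injOn_fst_facetOf d u).mono (coe_subset.2 hu)⟩,
    fun ⟨hpow, hinj⟩ => ⟨hpow, ?_⟩⟩
  obtain ⟨u, hu, hsw⟩ :=
    exists_eqOn_card_sw_le d (σ.image Prod.fst) fun j => decide ((j, true) ∈ σ)
  refine ⟨u, by have := card_image_le (s := σ) (f := Prod.fst); omega, ?_⟩
  rintro ⟨j, b⟩ hjb
  rw [facetOf, mem_image]
  refine ⟨j, (mem_product.1 (mem_powerset.1 hpow hjb)).1, ?_⟩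
  rw [hu j (mem_image_of_mem _ hjb)]
  simp [mem_iff_of_injOn_fst hinj hjb]

lemma fB_eq_of_le {i d k : ℕ} (hk : k ≤ i + 1) : fB i d k = 2 ^ k * d.choose k := by
  have hcount := card_filter_injOn_fst_powerset (Icc 1 d) k
  rw [Nat.card_Icc, Nat.add_sub_cancel] at hcount
  rw [← hcount, fB]
  congr 1
  ext σ
  rw [mem_filter, mem_filter]
  constructor
  · rintro ⟨hσ, rfl⟩
    exact ⟨((mem_facesB_iff hk).1 hσ).1, rfl, ((mem_facesB_iff hk).1 hσ).2⟩
  · rintro ⟨hpow, rfl, hinj⟩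
    exact ⟨(mem_facesB_iff hk).2 ⟨hpow, hinj⟩, rfl⟩

theorem sum_neg_one_pow_mul_choose_sub_mul_two_pow_mul_choose (d j : ℕ) :
    ∑ k ∈ range (j + 1), (-1 : ℤ) ^ (j - k) * (d - k).choose (j - k) * (2 ^ k * d.choose k) =
      d.choose j := by
  have hterm : ∀ k ∈ range (j + 1),
      (-1 : ℤ) ^ (j - k) * (d - k).choose (j - k) * (2 ^ k * d.choose k) =
        d.choose j * (2 ^ k * (-1) ^ (j - k) * j.choose k) := by
    intro k hk
    have hchoose : (d.choose j * j.choose k : ℤ) = d.choose k * (d - k).choose (j - k) := by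
      exact_mod_cast Nat.choose_mul (Nat.lt_succ_iff.1 (mem_range.1 hk))
    linear_combination -((-1 : ℤ) ^ (j - k) * 2 ^ k) * hchoose
  rw [sum_congr rfl hterm, ← mul_sum, ← add_pow]
  norm_num

theorem stmt19_general (d i j : ℕ) (hj : j ≤ i + 1) :
    (∑ k ∈ Finset.range (j + 1),
        (-1 : ℤ) ^ (j - k) * (d - k).choose (j - k) * fB i d k) =
      d.choose j ∧
    ∀ k ≤ i + 1, fB i d k = 2 ^ k * d.choose k := by
  refine ⟨?_, fun k hk => fB_eq_of_le hk⟩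
  rw [← sum_neg_one_pow_mul_choose_sub_mul_two_pow_mul_choose d j]
  refine sum_congr rfl fun k hk => ?_
  rw [fB_eq_of_le (by have := mem_range.1 hk; omega)]
  push_cast
  ring

/-- For `j ≤ i+1`, `h_j(B(i,d)) = ∑_{k=0}^{j} (-1)^{j-k} C(d-k, j-k) f_{k-1}`
equals `C(d,j)`; in particular `B(i,d)` has all `2^k C(d,k)` faces of
cardinality `k` of the cross-polytope for `k ≤ i+1`. -/
theorem stmt19 (d i j : ℕ) (hd : 1 ≤ d) (hi : i ≤ d - 1) (hj : j ≤ i + 1) :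
    (∑ k ∈ Finset.range (j + 1),
        (-1 : ℤ) ^ (j - k) * (d - k).choose (j - k) * fB i d k) =
      d.choose j ∧
    ∀ k ≤ i + 1, fB i d k = 2 ^ k * d.choose k :=
  stmt19_general d i j hj
end
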